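/- Let V be a finite set partitioned into sets V_1,...,V_m of equal size n, let P be a stochastic matrix on V, and let h ≥ 0. For each j, define the averaged measure ψ_j(·) = (1/n)·Σ_{y∈V_j} P^h(y,·), and let ρ_1,...,ρ_m be probability measures with ρ_j supported on V_j. Then Σ_{j=1}^m (1/m)·‖ψ_j − ρ_j‖_TV ≤ ‖(1/m)·Σ_{j=1}^m ψ_j − (1/m)·Σ_{j=1}^m ρ_j‖_TV + (1/m)·Σ_{j=1}^m ψ_j(V \ V_j). -/

import Mathlib

/-!
Fix a vertex `y`. The communities are disjoint, so `y` lies in at most one of them, and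
`ρ_j(y) = 0` for every other `j`; for those `j` the term `ψ_j(y) - ρ_j(y) = ψ_j(y)` is
nonnegative, and it is mass that has escaped community `j`. Pulling these nonnegative terms out
of `∑_j |ψ_j(y) - ρ_j(y)|` and back into `|∑_j (ψ_j(y) - ρ_j(y))|` costs, by the triangle
inequality, at most twice their sum. Summing over `y` turns these sums into the escape
probabilities `∑_j ψ_j(V \ V_j)`, and dividing by `2m` gives the inequality.
-/

open Finset Function

theorem Finset.abs_sum_of_card_le_one {ι α : Type*} [AddCommGroup α] [LinearOrder α]
    [IsOrderedAddMonoid α] {s : Finset ι} (hs : #s ≤ 1) (c : ι → α) :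
    |∑ i ∈ s, c i| = ∑ i ∈ s, |c i| := by
  rcases Nat.le_one_iff_eq_zero_or_eq_one.mp hs with hs | hs
  · simp [card_eq_zero.mp hs]
  · obtain ⟨i, rfl⟩ := card_eq_one.mp hs
    simp

theorem Finset.sum_abs_le_abs_sum_add_two_nsmul {ι α : Type*} [DecidableEq ι]
    [AddCommGroup α] [LinearOrder α] [IsOrderedAddMonoid α] {s t : Finset ι} (hts : t ⊆ s)
    (hst : #(s \ t) ≤ 1) {c : ι → α} (hc : ∀ i ∈ t, 0 ≤ c i) :
    ∑ i ∈ s, |c i| ≤ |∑ i ∈ s, c i| + 2 • ∑ i ∈ t, c i := by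
  have ht : ∑ i ∈ t, |c i| = ∑ i ∈ t, c i :=
    sum_congr rfl fun i hi => abs_of_nonneg (hc i hi)
  have hsplit : ∑ i ∈ s \ t, c i = ∑ i ∈ s, c i - ∑ i ∈ t, c i :=
    eq_sub_of_add_eq (sum_sdiff hts)
  have hdiff : |∑ i ∈ s \ t, c i| ≤ |∑ i ∈ s, c i| + ∑ i ∈ t, c i := by
    rw [hsplit]
    exact (abs_sub _ _).trans_eq (by rw [abs_of_nonneg (sum_nonneg hc)])
  rw [← sum_sdiff hts, ht, ← abs_sum_of_card_le_one hst, two_nsmul, ← add_assoc]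
  exact add_le_add_left hdiff _

theorem sum_sum_abs_sub_le_sum_abs_sum_sub_add {ι V α : Type*} [Fintype ι] [DecidableEq ι]
    [Fintype V] [DecidableEq V] [AddCommGroup α] [LinearOrder α] [IsOrderedAddMonoid α]
    {S : ι → Finset V} (hS : Pairwise (Disjoint on S)) {ψ ρ : ι → V → α}
    (hψ : ∀ i y, 0 ≤ ψ i y) (hρ : ∀ i y, y ∉ S i → ρ i y = 0) :
    ∑ i, ∑ y, |ψ i y - ρ i y| ≤
      ∑ y, |∑ i, (ψ i y - ρ i y)| + 2 • ∑ i, ∑ y ∈ univ \ S i, ψ i y := by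
  have hswap : ∑ i, ∑ y ∈ univ \ S i, ψ i y = ∑ y, ∑ i with y ∉ S i, ψ i y :=
    sum_comm' fun i y => by simp
  rw [sum_comm, hswap, smul_sum, ← sum_add_distrib]
  refine sum_le_sum fun y _ => ?_
  have hcompl : #(univ \ univ.filter (y ∉ S ·)) ≤ 1 := card_le_one.2 fun i hi j hj => by
    by_contra hij
    simp only [mem_sdiff, mem_univ, mem_filter, true_and, not_not] at hi hj
    exact disjoint_left.mp (hS hij) hi hj
  refine (sum_abs_le_abs_sum_add_two_nsmul (subset_univ _) hcompl fun i hi => ?_).trans_eq ?_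
  · simpa [hρ i y (mem_filter.mp hi).2] using hψ i y
  · congr 2
    exact sum_congr rfl fun i hi => by rw [hρ i y (mem_filter.mp hi).2, sub_zero]

theorem community_tv_inequality_general (V : Type*) [Fintype V] [DecidableEq V]
    (m n : ℕ)
    (Vs : Fin m → Finset V)
    (hdisj : ∀ i j, i ≠ j → Disjoint (Vs i) (Vs j))
    (P : Matrix V V ℝ) (hP0 : ∀ x y, 0 ≤ P x y)
    (h : ℕ)
    (ρ : Fin m → V → ℝ)
    (hsupp : ∀ i x, x ∉ Vs i → ρ i x = 0) :
    ∑ j : Fin m, (1 / (m : ℝ)) *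
        ((1 / 2) * ∑ y : V, |(1 / (n : ℝ)) * ∑ x ∈ Vs j, (P ^ h) x y - ρ j y|) ≤
      (1 / 2) * ∑ y : V,
          |(1 / (m : ℝ)) * ∑ j : Fin m, (1 / (n : ℝ)) * ∑ x ∈ Vs j, (P ^ h) x y -
            (1 / (m : ℝ)) * ∑ j : Fin m, ρ j y| +
        (1 / (m : ℝ)) * ∑ j : Fin m,
          ∑ y ∈ Finset.univ \ Vs j, (1 / (n : ℝ)) * ∑ x ∈ Vs j, (P ^ h) x y := by
  have hψ (j : Fin m) (y : V) : 0 ≤ (1 / (n : ℝ)) * ∑ x ∈ Vs j, (P ^ h) x y :=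
    mul_nonneg (by positivity) (sum_nonneg fun x _ => Matrix.pow_apply_nonneg hP0 h x y)
  have key := sum_sum_abs_sub_le_sum_abs_sum_sub_add (fun i j => hdisj i j) hψ hsupp
  have hmean : ∀ a b : Fin m → ℝ, |(1 / (m : ℝ)) * ∑ j, a j - (1 / (m : ℝ)) * ∑ j, b j| =
      (1 / (m : ℝ)) * |∑ j, (a j - b j)| := fun a b => by
    rw [← mul_sub, ← sum_sub_distrib, abs_mul, abs_of_nonneg (by positivity)]
  simp_rw [hmean, ← mul_sum, two_nsmul] at key ⊢
  have hm : (0 : ℝ) ≤ 1 / (m : ℝ) := by positivity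
  linarith [mul_le_mul_of_nonneg_left key hm]

/-- Deterministic inequality comparing community-wise distances with the global distance plus
the escape probabilities (Lemma 34 of the paper). -/
theorem community_tv_inequality (V : Type*) [Fintype V] [DecidableEq V]
    (m n : ℕ) (hm : 1 ≤ m) (hn : 1 ≤ n)
    (Vs : Fin m → Finset V)
    (hdisj : ∀ i j, i ≠ j → Disjoint (Vs i) (Vs j))
    (hcover : Finset.univ = Finset.univ.biUnion Vs)
    (hcard : ∀ i, (Vs i).card = n)
    (P : Matrix V V ℝ) (hP0 : ∀ x y, 0 ≤ P x y) (hP1 : ∀ x, ∑ y : V, P x y = 1)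
    (h : ℕ)
    (ρ : Fin m → V → ℝ) (hρ0 : ∀ i x, 0 ≤ ρ i x) (hρ1 : ∀ i, ∑ x : V, ρ i x = 1)
    (hsupp : ∀ i x, x ∉ Vs i → ρ i x = 0) :
    ∑ j : Fin m, (1 / (m : ℝ)) *
        ((1 / 2) * ∑ y : V, |(1 / (n : ℝ)) * ∑ x ∈ Vs j, (P ^ h) x y - ρ j y|) ≤
      (1 / 2) * ∑ y : V,
          |(1 / (m : ℝ)) * ∑ j : Fin m, (1 / (n : ℝ)) * ∑ x ∈ Vs j, (P ^ h) x y -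
            (1 / (m : ℝ)) * ∑ j : Fin m, ρ j y| +
        (1 / (m : ℝ)) * ∑ j : Fin m,
          ∑ y ∈ Finset.univ \ Vs j, (1 / (n : ℝ)) * ∑ x ∈ Vs j, (P ^ h) x y :=
  community_tv_inequality_general V m n Vs hdisj P hP0 h ρ hsupp
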